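/- arXiv:2207.07438 — 3 statements merged into one kernel-verified Lean document; each statement's English description precedes it below -/
import Mathlib

section
/- In any graph G, every fractional matching has total value at most (3/2)·μ(G). -/
variable {V : Type*}

/-- A matching of `G`: a finset of edges of `G` that are pairwise vertex-disjoint. -/
def IsMatching (G : SimpleGraph V) (M : Finset (Sym2 V)) : Prop :=
  (∀ e ∈ M, e ∈ G.edgeSet) ∧
    ∀ e ∈ M, ∀ f ∈ M, e ≠ f → ∀ v : V, v ∈ e → v ∉ f

/-- A vertex is matched by `M` if it belongs to some edge of `M`. -/
def Matched (M : Finset (Sym2 V)) (v : V) : Prop := ∃ e ∈ M, v ∈ e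

/-- A maximal matching: every edge of `G` has a matched endpoint. -/
def IsMaximalMatching (G : SimpleGraph V) (M : Finset (Sym2 V)) : Prop :=
  IsMatching G M ∧ ∀ e ∈ G.edgeSet, ∃ v, v ∈ e ∧ Matched M v

/-- μ(G): the maximum matching size of `G`. -/
noncomputable def matchNum (G : SimpleGraph V) : ℕ :=
  sSup {n | ∃ M : Finset (Sym2 V), IsMatching G M ∧ M.card = n}

/-- The subgraph of `G` induced by the vertex set `S` (on the same vertex type). -/
def restrictVerts (G : SimpleGraph V) (S : Set V) : SimpleGraph V where
  Adj u v := G.Adj u v ∧ u ∈ S ∧ v ∈ S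
  symm := ⟨fun u v h => ⟨h.1.symm, h.2.2, h.2.1⟩⟩
  loopless := ⟨fun u h => G.loopless.irrefl u h.1⟩

/-- `M` is an ε-approximately maximal matching of `G`: it is maximal in a subgraph of `G`
obtained by deleting at most `ε * μ(G)` vertices. -/
def IsAMM (G : SimpleGraph V) (ε : ℝ) (M : Finset (Sym2 V)) : Prop :=
  IsMatching G M ∧ ∃ D : Finset V, (D.card : ℝ) ≤ ε * matchNum G ∧
    IsMaximalMatching (restrictVerts G ((↑D : Set V)ᶜ)) M

def IsFractionalMatching [Fintype V] [DecidableEq V] (G : SimpleGraph V)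
    [DecidableRel G.Adj] (x : Sym2 V → ℝ) : Prop :=
  (∀ e, 0 ≤ x e) ∧ (∀ e ∉ G.edgeSet, x e = 0) ∧
    ∀ v : V, ∑ e ∈ G.edgeFinset.filter (fun e => v ∈ e), x e ≤ 1

/-! Fix a maximum matching `M` and sum the vertex constraints of `x`: twice the total weight is
at most the number `2|M|` of matched vertices plus the weight at the unmatched vertices. By
maximality every edge at an unmatched vertex ends in some `uv ∈ M`, and since there is no
augmenting path `a - u = v - b`, either one of `u`, `v` has no unmatched neighbour or both have
the same single one. Either way the weight between `uv` and the unmatched vertices is the load of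
one vertex, hence at most `1`, which gives `2 ∑ x ≤ 3|M|`. -/

open Finset

section

variable {G : SimpleGraph V} {M N : Finset (Sym2 V)}

theorem IsMatching.subset (hM : IsMatching G M) (h : N ⊆ M) : IsMatching G N :=
  ⟨fun e he => hM.1 e (h he), fun e he f hf => hM.2 e (h he) f (h hf)⟩

theorem IsMatching.insert_edge [DecidableEq V] {e : Sym2 V} (hM : IsMatching G M)
    (he : e ∈ G.edgeSet) (hdisj : ∀ f ∈ M, ∀ v ∈ e, v ∉ f) : IsMatching G (insert e M) := by
  refine ⟨fun f hf => ?_, fun f hf f' hf' hne v hv hv' => ?_⟩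
  · rcases mem_insert.1 hf with rfl | hfM
    exacts [he, hM.1 f hfM]
  · rcases mem_insert.1 hf with rfl | hfM <;> rcases mem_insert.1 hf' with rfl | hfM'
    · exact hne rfl
    · exact hdisj f' hfM' v hv hv'
    · exact hdisj f hfM v hv' hv
    · exact hM.2 f hfM f' hfM' hne v hv hv'

theorem card_insert_of_forall_notMem [DecidableEq V] {e : Sym2 V}
    (hdisj : ∀ f ∈ M, ∀ v ∈ e, v ∉ f) : (insert e M).card = M.card + 1 :=
  card_insert_of_notMem fun he => hdisj e he _ (Sym2.out_fst_mem e) (Sym2.out_fst_mem e)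

theorem mem_biUnion_toFinset_iff_matched [DecidableEq V] {v : V} :
    v ∈ M.biUnion Sym2.toFinset ↔ Matched M v := by
  simp [Matched, Sym2.mem_toFinset]

theorem IsMatching.pairwiseDisjoint_toFinset [DecidableEq V] (hM : IsMatching G M) :
    (M : Set (Sym2 V)).PairwiseDisjoint Sym2.toFinset := fun e he f hf hne =>
  disjoint_left.2 fun v hve hvf =>
    hM.2 e he f hf hne v (Sym2.mem_toFinset.1 hve) (Sym2.mem_toFinset.1 hvf)

def IsMaximumMatching (G : SimpleGraph V) (M : Finset (Sym2 V)) : Prop :=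
  IsMatching G M ∧ ∀ N, IsMatching G N → N.card ≤ M.card

theorem exists_isMaximumMatching_card_eq_matchNum [Fintype V] (G : SimpleGraph V) :
    ∃ M, IsMaximumMatching G M ∧ M.card = matchNum G := by
  classical
  have hbdd : BddAbove {n | ∃ M : Finset (Sym2 V), IsMatching G M ∧ M.card = n} :=
    ⟨Fintype.card (Sym2 V), by rintro n ⟨M, -, rfl⟩; exact card_le_univ M⟩
  have hne : {n | ∃ M : Finset (Sym2 V), IsMatching G M ∧ M.card = n}.Nonempty :=
    ⟨0, ∅, ⟨by simp, by simp⟩, rfl⟩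
  obtain ⟨M, hM, hcard⟩ := Nat.sSup_mem hne hbdd
  exact ⟨M, ⟨hM, fun N hN => hcard ▸ le_csSup hbdd ⟨N, hN, rfl⟩⟩, hcard⟩

namespace IsMaximumMatching

theorem matched_or_matched [DecidableEq V] (hM : IsMaximumMatching G M) {a b : V}
    (hab : G.Adj a b) : Matched M a ∨ Matched M b := by
  by_contra! h
  have hdisj : ∀ f ∈ M, ∀ v ∈ s(a, b), v ∉ f := by
    rintro f hf v hv hvf
    rcases Sym2.mem_iff.1 hv with rfl | rfl
    exacts [h.1 ⟨f, hf, hvf⟩, h.2 ⟨f, hf, hvf⟩]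
  have := hM.2 _ (hM.1.insert_edge hab hdisj)
  rw [card_insert_of_forall_notMem hdisj] at this
  omega

/-- There is no augmenting path `a - u = v - b` of length three. -/
theorem eq_of_adj_of_adj [DecidableEq V] (hM : IsMaximumMatching G M) {u v a b : V}
    (huv : s(u, v) ∈ M) (ha : ¬ Matched M a) (hb : ¬ Matched M b)
    (hua : G.Adj u a) (hvb : G.Adj v b) : a = b := by
  by_contra hab
  have hu : Matched M u := ⟨_, huv, Sym2.mem_mk_left u v⟩
  have hv : Matched M v := ⟨_, huv, Sym2.mem_mk_right u v⟩
  have hdisj_erase : ∀ {w c}, w ∈ s(u, v) → ¬ Matched M c →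
      ∀ f ∈ M.erase s(u, v), ∀ y ∈ s(w, c), y ∉ f := by
    intro w c hw hc f hf y hy hyf
    obtain ⟨hne, hf⟩ := mem_erase.1 hf
    rcases Sym2.mem_iff.1 hy with rfl | rfl
    exacts [hM.1.2 _ huv f hf hne.symm y hw hyf, hc ⟨f, hf, hyf⟩]
  have hvb_disj := hdisj_erase (Sym2.mem_mk_right u v) hb
  have hua_disj : ∀ f ∈ insert s(v, b) (M.erase s(u, v)), ∀ y ∈ s(u, a), y ∉ f := by
    intro f hf
    rcases mem_insert.1 hf with rfl | hf
    · intro y hy hyf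
      rcases Sym2.mem_iff.1 hy with rfl | rfl <;> rcases Sym2.mem_iff.1 hyf with h | h
      exacts [G.ne_of_adj (hM.1.1 _ huv) h, hb (h ▸ hu), ha (h ▸ hv), hab h]
    · exact hdisj_erase (Sym2.mem_mk_left u v) ha f hf
  have := hM.2 _
    (((hM.1.subset (erase_subset _ M)).insert_edge hvb hvb_disj).insert_edge hua hua_disj)
  rw [card_insert_of_forall_notMem hua_disj, card_insert_of_forall_notMem hvb_disj,
    card_erase_of_mem huv] at this
  have := card_pos.2 ⟨_, huv⟩
  omega

end IsMaximumMatching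

end

section

variable [Fintype V] {G : SimpleGraph V} [DecidableRel G.Adj] {x : Sym2 V → ℝ}

theorem sum_filter_mem_edgeFinset_eq_sum [DecidableEq V] (hx : ∀ e ∉ G.edgeSet, x e = 0)
    (v : V) : ∑ e ∈ G.edgeFinset.filter (v ∈ ·), x e = ∑ w, x s(v, w) := by
  have himage : G.edgeFinset.filter (v ∈ ·) = (G.neighborFinset v).image (s(v, ·)) := by
    rw [← G.incidenceFinset_eq_filter]
    ext e
    induction e using Sym2.ind with
    | _ a b =>
      simp only [SimpleGraph.mem_incidenceFinset, SimpleGraph.mk'_mem_incidenceSet_iff,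
        mem_image, SimpleGraph.mem_neighborFinset, Sym2.eq_iff]
      constructor
      · rintro ⟨hab, rfl | rfl⟩
        exacts [⟨b, hab, .inl ⟨rfl, rfl⟩⟩, ⟨a, hab.symm, .inr ⟨rfl, rfl⟩⟩]
      · rintro ⟨w, hvw, ⟨rfl, rfl⟩ | ⟨rfl, rfl⟩⟩
        exacts [⟨hvw, .inl rfl⟩, ⟨hvw.symm, .inr rfl⟩]
  rw [himage, sum_image fun _ _ _ _ h => Sym2.congr_right.1 h]
  refine sum_subset (subset_univ _) fun w _ hw => hx _ ?_
  simpa using hw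

theorem sum_sum_eq_two_mul_sum_edgeFinset [DecidableEq V] (hx : ∀ e ∉ G.edgeSet, x e = 0) :
    ∑ v, ∑ w, x s(v, w) = 2 * ∑ e ∈ G.edgeFinset, x e := by
  simp_rw [← sum_filter_mem_edgeFinset_eq_sum hx, sum_filter]
  rw [sum_comm, mul_sum]
  refine sum_congr rfl fun e he => ?_
  have hmem : univ.filter (· ∈ e) = e.toFinset := by ext; simp [Sym2.mem_toFinset]
  rw [← sum_filter, sum_const, nsmul_eq_mul, hmem,
    Sym2.card_toFinset_of_not_isDiag e (G.not_isDiag_of_mem_edgeSet (G.mem_edgeFinset.1 he))]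
  norm_num

end

namespace IsFractionalMatching

variable [Fintype V] [DecidableEq V] {G : SimpleGraph V} [DecidableRel G.Adj]
  {x : Sym2 V → ℝ}

theorem sum_le_one (hx : IsFractionalMatching G x) (v : V) (U : Finset V) :
    ∑ w ∈ U, x s(v, w) ≤ 1 :=
  calc ∑ w ∈ U, x s(v, w) ≤ ∑ w, x s(v, w) :=
        sum_le_univ_sum_of_nonneg fun _ => hx.1 _
    _ ≤ 1 := sum_filter_mem_edgeFinset_eq_sum hx.2.1 v ▸ hx.2.2 v

theorem eq_zero_of_not_adj (hx : IsFractionalMatching G x) {v w : V} (h : ¬ G.Adj v w) :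
    x s(v, w) = 0 :=
  hx.2.1 _ h

theorem sum_add_le_one_of_adj_eq (hx : IsFractionalMatching G x) {u v : V} (huv : u ≠ v)
    {U : Finset V} (hU : ∀ a ∈ U, ∀ b ∈ U, G.Adj u a → G.Adj v b → a = b) :
    ∑ c ∈ U, (x s(u, c) + x s(v, c)) ≤ 1 := by
  by_cases hu : ∃ a ∈ U, G.Adj u a
  · by_cases hv : ∃ b ∈ U, G.Adj v b
    · obtain ⟨a, ha, hua⟩ := hu
      obtain ⟨b, hb, hvb⟩ := hv
      obtain rfl := hU a ha b hb hua hvb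
      rw [sum_add_distrib, sum_eq_single_of_mem a ha, sum_eq_single_of_mem a ha]
      · simpa [sum_pair huv, Sym2.eq_swap] using hx.sum_le_one a {u, v}
      · exact fun c hc hca => hx.eq_zero_of_not_adj fun hvc => hca (hU a ha c hc hua hvc).symm
      · exact fun c hc hca => hx.eq_zero_of_not_adj fun huc => hca (hU c hc a ha huc hvb)
    · push Not at hv
      calc ∑ c ∈ U, (x s(u, c) + x s(v, c)) = ∑ c ∈ U, x s(u, c) :=
            sum_congr rfl fun c hc => by rw [hx.eq_zero_of_not_adj (hv c hc), add_zero]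
        _ ≤ 1 := hx.sum_le_one u U
  · push Not at hu
    calc ∑ c ∈ U, (x s(u, c) + x s(v, c)) = ∑ c ∈ U, x s(v, c) :=
          sum_congr rfl fun c hc => by rw [hx.eq_zero_of_not_adj (hu c hc), zero_add]
      _ ≤ 1 := hx.sum_le_one v U

theorem sum_sum_biUnion_toFinset_le (hx : IsFractionalMatching G x) (M : Finset (Sym2 V)) :
    ∑ v ∈ M.biUnion Sym2.toFinset, ∑ w, x s(v, w) ≤ 2 * M.card :=
  calc ∑ v ∈ M.biUnion Sym2.toFinset, ∑ w, x s(v, w) ≤ (M.biUnion Sym2.toFinset).card := by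
        simpa using sum_le_sum fun v (_ : v ∈ M.biUnion Sym2.toFinset) => hx.sum_le_one v univ
    _ ≤ (M.card * 2 : ℕ) := by
        refine Nat.cast_le.2 (card_biUnion_le_card_mul _ _ _ fun e _ => ?_)
        rw [Sym2.card_toFinset]
        split_ifs <;> omega
    _ = 2 * M.card := by push_cast; ring

theorem sum_sum_compl_biUnion_toFinset_le (hx : IsFractionalMatching G x)
    {M : Finset (Sym2 V)} (hM : IsMaximumMatching G M) :
    ∑ c ∈ (M.biUnion Sym2.toFinset)ᶜ, ∑ w, x s(c, w) ≤ M.card := by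
  set U := (M.biUnion Sym2.toFinset)ᶜ
  have hU : ∀ c ∈ U, ¬ Matched M c := fun c hc h =>
    mem_compl.1 hc (mem_biUnion_toFinset_iff_matched.2 h)
  have hsupp : ∀ c ∈ U, ∑ w, x s(c, w) = ∑ e ∈ M, ∑ w ∈ e.toFinset, x s(c, w) := by
    intro c hc
    rw [← sum_biUnion hM.1.pairwiseDisjoint_toFinset]
    refine (sum_subset (subset_univ _) fun w _ hw => ?_).symm
    refine hx.eq_zero_of_not_adj fun hcw => ?_
    rcases hM.matched_or_matched hcw with h | h
    exacts [hU c hc h, hw (mem_biUnion_toFinset_iff_matched.2 h)]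
  have hlocal : ∀ e ∈ M, ∑ c ∈ U, ∑ w ∈ e.toFinset, x s(c, w) ≤ 1 := by
    intro e he
    induction e using Sym2.ind with
    | _ u v =>
      have huv : u ≠ v := G.ne_of_adj (hM.1.1 _ he)
      simpa [Sym2.toFinset_mk_eq, sum_pair huv, Sym2.eq_swap] using
        hx.sum_add_le_one_of_adj_eq huv fun a ha b hb =>
          hM.eq_of_adj_of_adj he (hU a ha) (hU b hb)
  calc ∑ c ∈ U, ∑ w, x s(c, w) = ∑ e ∈ M, ∑ c ∈ U, ∑ w ∈ e.toFinset, x s(c, w) := by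
        rw [sum_congr rfl hsupp, sum_comm]
    _ ≤ ∑ e ∈ M, (1 : ℝ) := sum_le_sum hlocal
    _ = M.card := by simp

theorem two_mul_sum_le_three_mul_card (hx : IsFractionalMatching G x) {M : Finset (Sym2 V)}
    (hM : IsMaximumMatching G M) : 2 * ∑ e ∈ G.edgeFinset, x e ≤ 3 * M.card := by
  rw [← sum_sum_eq_two_mul_sum_edgeFinset hx.2.1, ← sum_add_sum_compl (M.biUnion Sym2.toFinset)]
  linarith [hx.sum_sum_biUnion_toFinset_le M, hx.sum_sum_compl_biUnion_toFinset_le hM]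

end IsFractionalMatching

theorem fractional_matching_integrality_gap [Fintype V] [DecidableEq V]
    (G : SimpleGraph V) [DecidableRel G.Adj]
    (x : Sym2 V → ℝ) (hx : IsFractionalMatching G x) :
    ∑ e ∈ G.edgeFinset, x e ≤ (3/2 : ℝ) * matchNum G := by
  obtain ⟨M, hM, hcard⟩ := exists_isMaximumMatching_card_eq_matchNum G
  have := hx.two_mul_sum_le_three_mul_card hM
  rw [hcard] at this
  linarith
end

section
/- Let K be a graph of maximum degree d ≥ 1/ε for some ε ∈ (0,1), and let H be its set of vertices of degree at least d(1−ε). Then K has a maximal matching that leaves at most a 2ε fraction of the vertices of H unmatched. -/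
variable {V : Type*}

/-! Instead of Vizing's theorem we use an alternating-path argument. Let `M` be a matching
covering as many vertices of `H` as possible. Call a vertex even-reachable if it ends an
`M`-alternating path of even length from an `M`-unmatched vertex of `H`, and odd-reachable if
it is the `M`-partner of a matched even-reachable vertex. By the maximality of `M`, every
even-reachable vertex lies in `H`, and every edge at an even-reachable vertex ends at an
odd-reachable one, except for at most one edge at each matched even-reachable vertex (the edge
closing a blossom). With `B` the matched even-reachable vertices and `U` the vertices of `H`
left unmatched, counting these edges gives `(|B| + |U|) d (1 - ε) ≤ |B| (d + 1)`; together with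
`|B| + |U| ≤ |H|` and `ε d ≥ 1` this yields `|U| ≤ 2 ε |H|`. A maximal matching containing `M`
leaves no further vertex of `H` unmatched. -/

open Finset

section Matching

variable {G : SimpleGraph V} {M N : Finset (Sym2 V)} {e f : Sym2 V} {u v w x y : V}

lemma matched_iff_exists_mk_mem : Matched M v ↔ ∃ w, s(v, w) ∈ M := by
  constructor
  · rintro ⟨e, he, hv⟩
    obtain ⟨w, rfl⟩ := Sym2.mem_iff_exists.mp hv
    exact ⟨w, he⟩
  · rintro ⟨w, hw⟩
    exact ⟨_, hw, Sym2.mem_mk_left v w⟩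

lemma matched_of_mk_mem_left (h : s(v, w) ∈ M) : Matched M v := ⟨_, h, Sym2.mem_mk_left v w⟩

lemma matched_of_mk_mem_right (h : s(v, w) ∈ M) : Matched M w := ⟨_, h, Sym2.mem_mk_right v w⟩

lemma Matched.mono (h : M ⊆ N) : Matched M v → Matched N v := fun ⟨e, he, hv⟩ => ⟨e, h he, hv⟩

lemma matched_insert_iff [DecidableEq V] : Matched (insert e M) v ↔ v ∈ e ∨ Matched M v := by
  simp [Matched]

lemma IsMatching.anti (hN : IsMatching G N) (h : M ⊆ N) : IsMatching G M :=
  ⟨fun e he => hN.1 e (h he), fun e he f hf => hN.2 e (h he) f (h hf)⟩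

lemma IsMatching.eq_of_mem_of_mem (hM : IsMatching G M) (he : e ∈ M) (hf : f ∈ M)
    (hve : v ∈ e) (hvf : v ∈ f) : e = f := by
  by_contra hef
  exact hM.2 e he f hf hef v hve hvf

lemma IsMatching.ne_of_mk_mem (hM : IsMatching G M) (h : s(v, w) ∈ M) : v ≠ w :=
  G.ne_of_adj (hM.1 _ h)

lemma IsMatching.matched_erase_iff [DecidableEq V] (hM : IsMatching G M) (he : e ∈ M) :
    Matched (M.erase e) v ↔ Matched M v ∧ v ∉ e := by
  constructor
  · rintro ⟨f, hf, hv⟩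
    exact ⟨⟨f, mem_of_mem_erase hf, hv⟩, fun hve =>
      ne_of_mem_erase hf (hM.eq_of_mem_of_mem (mem_of_mem_erase hf) he hv hve)⟩
  · rintro ⟨⟨f, hf, hv⟩, hve⟩
    exact ⟨f, mem_erase_of_ne_of_mem (by rintro rfl; exact hve hv) hf, hv⟩

lemma IsMatching.insert [DecidableEq V] (hM : IsMatching G M) (hadj : G.Adj x y)
    (hx : ¬ Matched M x) (hy : ¬ Matched M y) : IsMatching G (insert s(x, y) M) := by
  have fresh : ∀ f ∈ M, ∀ z ∈ s(x, y), z ∉ f := by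
    rintro f hf z hz hzf
    rcases Sym2.mem_iff.mp hz with rfl | rfl
    exacts [hx ⟨f, hf, hzf⟩, hy ⟨f, hf, hzf⟩]
  refine ⟨fun e he => ?_, fun e he f hf hef z hze hzf => ?_⟩
  · rcases mem_insert.mp he with rfl | he
    exacts [hadj, hM.1 e he]
  · rcases mem_insert.mp he with rfl | he <;> rcases mem_insert.mp hf with rfl | hf
    · exact hef rfl
    · exact fresh f hf z hze hzf
    · exact fresh e he z hzf hze
    · exact hM.2 e he f hf hef z hze hzf

lemma isMatching_empty : IsMatching G ∅ := ⟨by simp, by simp⟩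

lemma exists_isMaximalMatching_superset [Finite V] (hM : IsMatching G M) :
    ∃ M', M ⊆ M' ∧ IsMaximalMatching G M' := by
  classical
  obtain ⟨M', ⟨hM', hMM'⟩, hmax⟩ := Set.exists_max_image {N | IsMatching G N ∧ M ⊆ N} card
    (Set.toFinite _) ⟨M, hM, subset_rfl⟩
  refine ⟨M', hMM', hM', fun e he => ?_⟩
  induction e with
  | _ x y =>
    by_contra! hfree
    have hx : ¬ Matched M' x := hfree x (Sym2.mem_mk_left x y)
    have hnew : s(x, y) ∉ M' := fun h => hx (matched_of_mk_mem_left h)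
    have := hmax _ ⟨hM'.insert he hx (hfree y (Sym2.mem_mk_right x y)),
      hMM'.trans (subset_insert _ _)⟩
    rw [card_insert_of_notMem hnew] at this
    omega

end Matching

section Partner

variable {G : SimpleGraph V} {M : Finset (Sym2 V)} {v w : V}

open Classical in
/-- The other endpoint of the `M`-edge at `v` (junk value `v` if `v` is unmatched). -/
noncomputable def partner (M : Finset (Sym2 V)) (v : V) : V :=
  if h : ∃ w, s(v, w) ∈ M then h.choose else v

lemma mk_partner_mem (h : Matched M v) : s(v, partner M v) ∈ M := by
  have h' := matched_iff_exists_mk_mem.mp h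
  rw [partner, dif_pos h']
  exact h'.choose_spec

lemma IsMatching.partner_eq (hM : IsMatching G M) (h : s(v, w) ∈ M) : partner M v = w :=
  Sym2.congr_right.mp <| hM.eq_of_mem_of_mem (mk_partner_mem (matched_of_mk_mem_left h)) h
    (Sym2.mem_mk_left _ _) (Sym2.mem_mk_left _ _)

lemma IsMatching.partner_partner (hM : IsMatching G M) (h : Matched M v) :
    partner M (partner M v) = v :=
  hM.partner_eq (Sym2.eq_swap ▸ mk_partner_mem h)

end Partner

section Coverage

variable {G : SimpleGraph V} {H : Finset V} {M N : Finset (Sym2 V)} {u : V}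

open Classical in
noncomputable def coverage (H : Finset V) (M : Finset (Sym2 V)) : ℕ := #{v ∈ H | Matched M v}

def IsMaxCoverage (G : SimpleGraph V) (H : Finset V) (M : Finset (Sym2 V)) : Prop :=
  IsMatching G M ∧ ∀ N, IsMatching G N → coverage H N ≤ coverage H M

lemma exists_isMaxCoverage [Finite V] (G : SimpleGraph V) (H : Finset V) :
    ∃ M, IsMaxCoverage G H M := by
  obtain ⟨M, hM, hmax⟩ := Set.exists_max_image {N | IsMatching G N} (coverage H)
    (Set.toFinite _) ⟨∅, isMatching_empty⟩
  exact ⟨M, hM, hmax⟩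

lemma coverage_lt_coverage_of_forall_matched (hMN : ∀ v ∈ H, Matched M v → Matched N v)
    (hu : u ∈ H) (huM : ¬ Matched M u) (huN : Matched N u) : coverage H M < coverage H N := by
  classical
  refine card_lt_card ⟨fun v hv => ?_, fun hsub => huM ?_⟩
  · simp only [mem_filter] at hv ⊢
    exact ⟨hv.1, hMN v hv.1 hv.2⟩
  · exact (mem_filter.mp (hsub (mem_filter.mpr ⟨hu, huN⟩))).2

lemma IsMaxCoverage.not_matched_of_forall_matched (hopt : IsMaxCoverage G H M)
    (hN : IsMatching G N) (hMN : ∀ v ∈ H, Matched M v → Matched N v) (hu : u ∈ H)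
    (huM : ¬ Matched M u) : ¬ Matched N u :=
  fun huN => (hopt.2 N hN).not_gt (coverage_lt_coverage_of_forall_matched hMN hu huM huN)

end Coverage

section AlternatingPath

variable {G : SimpleGraph V} {M : Finset (Sym2 V)} {H : Finset V} {u x : V}
  {c : List (V × V)}

def verts (c : List (V × V)) : List V := c.flatMap fun p => [p.1, p.2]

@[simp] lemma verts_nil : verts ([] : List (V × V)) = [] := rfl

@[simp] lemma verts_cons (p : V × V) (c : List (V × V)) :
    verts (p :: c) = p.1 :: p.2 :: verts c := rfl

@[simp] lemma verts_append (c₁ c₂ : List (V × V)) : verts (c₁ ++ c₂) = verts c₁ ++ verts c₂ :=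
  List.flatMap_append

lemma mem_verts {z : V} : z ∈ verts c ↔ ∃ p ∈ c, z = p.1 ∨ z = p.2 := by
  simp [verts]

/-- `AltPath G M H u x c`: a simple `M`-alternating path in `G` of even length from a vertex
`u ∈ H` left unmatched by `M` to `x`. The list `c` records its `M`-edges `s(a, v)` as pairs
`(v, a)`, with `v` the endpoint farther from `u`, the last edge first. -/
inductive AltPath (G : SimpleGraph V) (M : Finset (Sym2 V)) (H : Finset V) (u : V) :
    V → List (V × V) → Prop
  | nil (hu : u ∈ H) (hum : ¬ Matched M u) : AltPath G M H u u []
  | cons {w a v : V} {c : List (V × V)} (h : AltPath G M H u w c) (hadj : G.Adj w a)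
      (hav : s(a, v) ∈ M) (ha : a ∉ u :: verts c) (hv : v ∉ u :: verts c) :
      AltPath G M H u v ((v, a) :: c)

/-- The last vertex of the path starting at `u` recorded by `c`. -/
def endpoint (u : V) : List (V × V) → V
  | [] => u
  | p :: _ => p.1

lemma endpoint_eq_of_append_eq_append {P : V → Prop} {c₁ c₂ d₁ d₂ : List (V × V)}
    (h : c₁ ++ c₂ = d₁ ++ d₂) (hc : ∀ p ∈ c₁, P p.1) (hd : ∀ p ∈ d₁, P p.1)
    (hc₂ : ¬ P (endpoint u c₂)) (hd₂ : ¬ P (endpoint u d₂)) :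
    endpoint u c₂ = endpoint u d₂ := by
  rcases List.append_eq_append_iff.mp h with ⟨_ | ⟨q, r⟩, rfl, rfl⟩ | ⟨_ | ⟨q, r⟩, rfl, rfl⟩
  · simp
  · exact (hc₂ (hd q (by simp))).elim
  · simp
  · exact (hd₂ (hc q (by simp))).elim

namespace AltPath

lemma start_mem (h : AltPath G M H u x c) : u ∈ H := by
  induction h with
  | nil hu => exact hu
  | cons _ _ _ _ _ ih => exact ih

lemma start_not_matched (h : AltPath G M H u x c) : ¬ Matched M u := by
  induction h with
  | nil _ hum => exact hum
  | cons _ _ _ _ _ ih => exact ih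

lemma mk_mem (h : AltPath G M H u x c) : ∀ p ∈ c, s(p.2, p.1) ∈ M := by
  induction h with
  | nil => simp
  | cons _ _ hav _ _ ih =>
    rintro p (_ | ⟨_, hp⟩)
    exacts [hav, ih p hp]

lemma matched_or_eq_start (h : AltPath G M H u x c) : Matched M x ∨ x = u := by
  cases h with
  | nil => exact Or.inr rfl
  | cons _ _ hav _ _ => exact Or.inl (matched_of_mk_mem_right hav)

lemma end_mem (h : AltPath G M H u x c) : x ∈ u :: verts c := by
  cases h <;> simp

lemma eq_endpoint (h : AltPath G M H u x c) : x = endpoint u c := by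
  cases h <;> rfl

lemma nodup (hM : IsMatching G M) (h : AltPath G M H u x c) : (u :: verts c).Nodup := by
  induction h with
  | nil => simp
  | cons _ _ hav ha hv ih =>
    have hav' := hM.ne_of_mk_mem hav
    simp only [List.mem_cons, not_or] at ha hv
    simp only [verts_cons, List.nodup_cons, List.mem_cons, not_or] at ih ⊢
    exact ⟨⟨Ne.symm hv.1, Ne.symm ha.1, ih.1⟩, ⟨hav'.symm, hv.2⟩, ha.2, ih.2⟩

lemma of_append {c₂ : List (V × V)} :
    ∀ {c₁ : List (V × V)} {x : V}, AltPath G M H u x (c₁ ++ c₂) →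
      AltPath G M H u (endpoint u c₂) c₂
  | [], _, h => h.eq_endpoint ▸ h
  | _ :: _, _, .cons h _ _ _ _ => of_append h

lemma extend {w a v : V} (h : AltPath G M H u w c) (hadj : G.Adj w a) (hav : s(a, v) ∈ M)
    (ha : a ∉ verts c) (hv : v ∉ verts c) : AltPath G M H u v ((v, a) :: c) := by
  have hu := h.start_not_matched
  have ha' : a ≠ u := fun e => hu (e ▸ matched_of_mk_mem_left hav)
  have hv' : v ≠ u := fun e => hu (e ▸ matched_of_mk_mem_right hav)
  exact h.cons hadj hav (by simp [ha, ha']) (by simp [hv, hv'])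

lemma exists_flip [DecidableEq V] (hM : IsMatching G M) (h : AltPath G M H u x c) :
    ∃ M', IsMatching G M' ∧ (∀ z, Matched M' z ↔ (Matched M z ∨ z = u) ∧ z ≠ x) ∧
      ∀ e ∈ M, (∀ z ∈ e, z ∉ u :: verts c) → e ∈ M' := by
  induction h with
  | nil _ hum =>
    refine ⟨M, hM, fun z => ⟨fun hz => ⟨Or.inl hz, ?_⟩, ?_⟩, fun e he _ => he⟩
    · rintro rfl
      exact hum hz
    · rintro ⟨hz | rfl, hne⟩
      exacts [hz, absurd rfl hne]
  | @cons w a v c h hadj hav ha hv ih =>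
    obtain ⟨N, hN, hNm, hNe⟩ := ih
    have havN : s(a, v) ∈ N := hNe _ hav fun z hz => by
      rcases Sym2.mem_iff.mp hz with rfl | rfl
      exacts [ha, hv]
    have hN'm := fun z => hN.matched_erase_iff (v := z) havN
    have hw : ¬ Matched (N.erase s(a, v)) w := by
      rw [hN'm, hNm]
      exact fun h' => h'.1.2 rfl
    have ha' : ¬ Matched (N.erase s(a, v)) a := by
      rw [hN'm]
      exact fun h' => h'.2 (Sym2.mem_mk_left a v)
    have hwv : w ≠ v := fun e => hv (e ▸ h.end_mem)
    refine ⟨insert s(w, a) (N.erase s(a, v)),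
      (hN.anti (erase_subset _ _)).insert hadj hw ha', fun z => ?_, fun e he hfresh => ?_⟩
    · rw [matched_insert_iff, hN'm, hNm]
      by_cases hzw : z = w
      · subst hzw
        simpa [hwv] using h.matched_or_eq_start
      by_cases hza : z = a
      · subst hza
        simp [matched_of_mk_mem_left hav, hM.ne_of_mk_mem hav]
      simp [hzw, hza]
    · refine mem_insert_of_mem (mem_erase_of_ne_of_mem ?_ (hNe e he fun z hz => ?_))
      · rintro rfl
        exact hfresh a (Sym2.mem_mk_left a v) (by simp)
      · have := hfresh z hz
        simp only [verts_cons, List.mem_cons, not_or] at this ⊢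
        exact ⟨this.1, this.2.2.2⟩

end AltPath

end AlternatingPath

namespace IsMaxCoverage

variable {G : SimpleGraph V} {M : Finset (Sym2 V)} {H : Finset V} {u x y : V}
  {c : List (V × V)}

lemma end_mem (hopt : IsMaxCoverage G H M) (h : AltPath G M H u x c) : x ∈ H := by
  classical
  by_contra hxH
  obtain ⟨M', hM', hM'm, -⟩ := h.exists_flip hopt.1
  have hne : ∀ z ∈ H, z ≠ x := fun z hz e => hxH (e ▸ hz)
  exact hopt.not_matched_of_forall_matched hM'
    (fun z hz hzM => (hM'm z).2 ⟨Or.inl hzM, hne z hz⟩) h.start_mem h.start_not_matched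
    ((hM'm u).2 ⟨Or.inr rfl, hne u h.start_mem⟩)

/-- Otherwise the path followed by the edge `s(x, y)` would be augmenting. -/
lemma mem_of_adj_not_matched (hopt : IsMaxCoverage G H M) (h : AltPath G M H u x c)
    (hadj : G.Adj x y) (hy : ¬ Matched M y) : y ∈ u :: verts c := by
  classical
  by_contra hyc
  obtain ⟨M', hM', hM'm, -⟩ := h.exists_flip hopt.1
  have hyu : y ≠ u := fun e => hyc (e ▸ List.mem_cons_self)
  have hN := hM'.insert hadj (fun hx => ((hM'm x).1 hx).2 rfl)
    (fun hy' => ((hM'm y).1 hy').1.elim hy hyu)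
  have hmatched : ∀ z, Matched M z ∨ z = u → Matched (insert s(x, y) M') z := by
    intro z hz
    rw [matched_insert_iff]
    by_cases hzx : z = x
    · exact Or.inl (hzx ▸ Sym2.mem_mk_left x y)
    · exact Or.inr ((hM'm z).2 ⟨hz, hzx⟩)
  exact hopt.not_matched_of_forall_matched hN (fun z _ hz => hmatched z (Or.inl hz))
    h.start_mem h.start_not_matched (hmatched u (Or.inr rfl))

end IsMaxCoverage

section Reachable

variable {G : SimpleGraph V} {M : Finset (Sym2 V)} {H : Finset V} {u x y z : V}
  {c : List (V × V)}

def EvenReachable (G : SimpleGraph V) (M : Finset (Sym2 V)) (H : Finset V) (x : V) : Prop :=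
  ∃ u c, AltPath G M H u x c

def OddReachable (G : SimpleGraph V) (M : Finset (Sym2 V)) (H : Finset V) (y : V) : Prop :=
  ∃ x, EvenReachable G M H x ∧ Matched M x ∧ partner M x = y

namespace AltPath

lemma partner_mem_verts (hM : IsMatching G M) (h : AltPath G M H u x c) (hz : z ∈ verts c) :
    partner M z ∈ verts c := by
  obtain ⟨p, hp, rfl | rfl⟩ := mem_verts.mp hz
  · rw [hM.partner_eq (Sym2.eq_swap ▸ h.mk_mem p hp)]
    exact mem_verts.mpr ⟨p, hp, Or.inr rfl⟩
  · rw [hM.partner_eq (h.mk_mem p hp)]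
    exact mem_verts.mpr ⟨p, hp, Or.inl rfl⟩

lemma exists_append_of_adj (hopt : IsMaxCoverage G H M) (h : AltPath G M H u x c)
    (hadj : G.Adj x y) (hy : ¬ OddReachable G M H y) :
    ∃ c₁ c₂, c = c₁ ++ c₂ ∧ y = endpoint u c₂ := by
  by_cases hyc : y ∈ u :: verts c
  · rcases List.mem_cons.mp hyc with rfl | hyc
    · exact ⟨c, [], by simp, rfl⟩
    obtain ⟨p, hp, hyp⟩ := mem_verts.mp hyc
    obtain ⟨c₁, c₂, rfl⟩ := List.append_of_mem hp
    rcases hyp with rfl | rfl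
    · exact ⟨c₁, p :: c₂, rfl, rfl⟩
    · exact (hy ⟨p.1, ⟨u, _, h.of_append⟩, matched_of_mk_mem_right (h.mk_mem p (by simp)),
        hopt.1.partner_eq (Sym2.eq_swap ▸ h.mk_mem p (by simp))⟩).elim
  · have hyv : y ∉ verts c := fun h' => hyc (List.mem_cons_of_mem _ h')
    by_cases hyM : Matched M y
    · refine (hy ⟨partner M y, ⟨u, _, h.extend hadj (mk_partner_mem hyM) hyv fun h' => ?_⟩,
        matched_of_mk_mem_right (mk_partner_mem hyM), hopt.1.partner_partner hyM⟩).elim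
      exact hyv (hopt.1.partner_partner hyM ▸ h.partner_mem_verts hopt.1 h')
    · exact (hyc (hopt.mem_of_adj_not_matched h hadj hyM)).elim

/-- Walking back along the path from `x` after arriving at `x` from the end `w` of a disjoint
path, the roles of the two endpoints of each `M`-edge are swapped. -/
lemma evenReachable_of_reversal :
    ∀ (c₁ : List (V × V)) {c₂ t : List (V × V)} {x w : V}, AltPath G M H u x (c₁ ++ c₂) →
      AltPath G M H u w t → G.Adj w x → (∀ z ∈ verts c₁, z ∉ u :: verts t) →
      ∀ p ∈ c₁, EvenReachable G M H p.2
  | [], _, _, _, _, _, _, _, _, _, hp => by simp at hp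
  | (x, a) :: c₁, _, t, _, w, .cons h hadj hxa ha hv, ht, hwx, hdisj, p, hp => by
    have hx : x ∉ u :: verts t := hdisj x (by simp)
    have ha' : a ∉ u :: verts t := hdisj a (by simp)
    have hstep : AltPath G M H u a ((a, x) :: t) := ht.cons hwx (Sym2.eq_swap ▸ hxa) hx ha'
    rcases List.mem_cons.mp hp with rfl | hp
    · exact ⟨u, _, hstep⟩
    refine evenReachable_of_reversal c₁ h hstep hadj.symm (fun z hz => ?_) p hp
    have hza : z ≠ a := fun e => ha (List.mem_cons_of_mem _ (by simp [← e, hz]))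
    have hzx : z ≠ x := fun e => hv (List.mem_cons_of_mem _ (by simp [← e, hz]))
    have := hdisj z (by simp [hz])
    simp only [verts_cons, List.mem_cons, not_or] at this ⊢
    exact ⟨this.1, hza, hzx, this.2⟩

/-- An edge from `x` back to an even vertex of its path closes a blossom, whose vertices after
that even vertex all become odd-reachable. -/
lemma oddReachable_of_adj_endpoint (hM : IsMatching G M) {c₁ c₂ : List (V × V)}
    (h : AltPath G M H u x (c₁ ++ c₂)) (hadj : G.Adj (endpoint u c₂) x) :
    ∀ p ∈ c₁, OddReachable G M H p.1 := by
  have hnd := h.nodup hM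
  rw [verts_append, ← List.cons_append, List.nodup_append] at hnd
  have hdisj : ∀ z ∈ verts c₁, z ∉ u :: verts c₂ := by
    intro z hz hz'
    rcases List.mem_cons.mp hz' with rfl | hz'
    · exact (List.nodup_cons.mp hnd.1).1 hz
    · exact hnd.2.2 z (List.mem_cons_of_mem _ hz) z hz' rfl
  intro p hp
  have hpM := h.mk_mem p (List.mem_append_left _ hp)
  exact ⟨p.2, evenReachable_of_reversal c₁ h h.of_append hadj hdisj p hp,
    matched_of_mk_mem_left hpM, hM.partner_eq hpM⟩

end AltPath

end Reachable

namespace IsMaxCoverage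

variable {G : SimpleGraph V} {M : Finset (Sym2 V)} {H : Finset V} {x y y₁ y₂ : V}

lemma eq_of_adj_of_not_oddReachable (hopt : IsMaxCoverage G H M)
    (hx : EvenReachable G M H x) (h₁ : G.Adj x y₁) (h₂ : G.Adj x y₂)
    (hy₁ : ¬ OddReachable G M H y₁) (hy₂ : ¬ OddReachable G M H y₂) : y₁ = y₂ := by
  obtain ⟨u, c, h⟩ := hx
  obtain ⟨c₁, c₂, rfl, rfl⟩ := h.exists_append_of_adj hopt h₁ hy₁
  obtain ⟨d₁, d₂, hd, rfl⟩ := h.exists_append_of_adj hopt h₂ hy₂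
  exact endpoint_eq_of_append_eq_append hd (h.oddReachable_of_adj_endpoint hopt.1 h₁.symm)
    ((hd ▸ h).oddReachable_of_adj_endpoint hopt.1 h₂.symm) hy₁ hy₂

lemma matched_of_adj_not_oddReachable (hopt : IsMaxCoverage G H M)
    (hx : EvenReachable G M H x) (hadj : G.Adj x y) (hy : ¬ OddReachable G M H y) :
    Matched M x := by
  by_contra hxM
  obtain ⟨u, c, h⟩ := hx
  have hnil : AltPath G M H x x [] := .nil (hopt.end_mem h) hxM
  obtain ⟨c₁, c₂, hc, rfl⟩ := hnil.exists_append_of_adj hopt hadj hy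
  rw [List.nil_eq_append_iff.mp hc |>.2] at hadj
  exact G.loopless.irrefl x hadj

end IsMaxCoverage

lemma SimpleGraph.sum_degree_le_sum_degree_add_card [Fintype V] [DecidableEq V]
    (G : SimpleGraph V) [DecidableRel G.Adj] {R A B : Finset V}
    (hB : ∀ x ∈ R, x ∉ B → G.neighborFinset x ⊆ A)
    (hA : ∀ x ∈ R, #(G.neighborFinset x \ A) ≤ 1) :
    ∑ x ∈ R, G.degree x ≤ ∑ a ∈ A, G.degree a + #B := by
  have hinter : ∑ x ∈ R, #(G.neighborFinset x ∩ A) ≤ ∑ a ∈ A, G.degree a := by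
    calc ∑ x ∈ R, #(G.neighborFinset x ∩ A) = ∑ x ∈ R, #(A.bipartiteAbove G.Adj x) := by
          congr! 2 with x
          ext a
          simp [bipartiteAbove, and_comm]
      _ = ∑ a ∈ A, #(R.bipartiteBelow G.Adj a) :=
          sum_card_bipartiteAbove_eq_sum_card_bipartiteBelow _
      _ ≤ ∑ a ∈ A, G.degree a := by
          gcongr with a
          rw [← G.card_neighborFinset_eq_degree]
          exact card_le_card fun x hx => by simpa using (mem_filter.mp hx).2.symm
  have hsdiff : ∑ x ∈ R, #(G.neighborFinset x \ A) ≤ #B :=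
    calc ∑ x ∈ R, #(G.neighborFinset x \ A) ≤ ∑ x ∈ R, if x ∈ B then 1 else 0 := by
          gcongr with x hx
          split_ifs with hxB
          · exact hA x hx
          · simp [sdiff_eq_empty_iff_subset.mpr (hB x hx hxB)]
      _ = #{x ∈ R | x ∈ B} := by rw [sum_boole, Nat.cast_id]
      _ ≤ #B := card_le_card fun x hx => (mem_filter.mp hx).2
  calc ∑ x ∈ R, G.degree x
      = ∑ x ∈ R, (#(G.neighborFinset x ∩ A) + #(G.neighborFinset x \ A)) := by
        simp only [card_inter_add_card_sdiff, card_neighborFinset_eq_degree]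
    _ ≤ ∑ a ∈ A, G.degree a + #B := by
        rw [sum_add_distrib]
        exact add_le_add hinter hsdiff

namespace IsMaxCoverage

variable [Fintype V] {G : SimpleGraph V} [DecidableRel G.Adj] {M : Finset (Sym2 V)}
  {H U : Finset V} {d : ℕ}

/-- `B` is the set of matched even-reachable vertices: every edge at an even-reachable vertex
ends at a partner of a vertex of `B`, except for at most one edge at each vertex of `B`. -/
lemma exists_sum_degree_le [DecidableEq V] (hopt : IsMaxCoverage G H M)
    (hdeg : ∀ v, G.degree v ≤ d) (hU : ∀ v ∈ U, v ∈ H ∧ ¬ Matched M v) :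
    ∃ B : Finset V, Disjoint B U ∧ B ⊆ H ∧ ∑ x ∈ B ∪ U, G.degree x ≤ #B * (d + 1) := by
  classical
  set B : Finset V := {x | EvenReachable G M H x ∧ Matched M x}
  have hB : ∀ {x}, x ∈ B ↔ EvenReachable G M H x ∧ Matched M x := by simp [B]
  have heven : ∀ x ∈ B ∪ U, EvenReachable G M H x := by
    intro x hx
    rcases mem_union.mp hx with hx | hx
    exacts [(hB.mp hx).1, ⟨x, [], .nil (hU x hx).1 (hU x hx).2⟩]
  have hodd : ∀ y, y ∉ B.image (partner M) → ¬ OddReachable G M H y :=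
    fun y hy ⟨x, hx, hxM, hxy⟩ => hy (mem_image.mpr ⟨x, hB.mpr ⟨hx, hxM⟩, hxy⟩)
  refine ⟨B, disjoint_left.mpr fun x hxB hxU => (hU x hxU).2 (hB.mp hxB).2,
    fun x hx => ?_, ?_⟩
  · obtain ⟨⟨u, c, h⟩, -⟩ := hB.mp hx
    exact hopt.end_mem h
  calc ∑ x ∈ B ∪ U, G.degree x ≤ ∑ a ∈ B.image (partner M), G.degree a + #B := by
        refine G.sum_degree_le_sum_degree_add_card (fun x hx hxB y hy => ?_) fun x hx => ?_
        · by_contra hyA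
          exact hxB (hB.mpr ⟨heven x hx, hopt.matched_of_adj_not_oddReachable (heven x hx)
            ((G.mem_neighborFinset x y).mp hy) (hodd y hyA)⟩)
        · refine card_le_one.mpr fun y₁ hy₁ y₂ hy₂ => ?_
          rw [mem_sdiff, G.mem_neighborFinset] at hy₁ hy₂
          exact hopt.eq_of_adj_of_not_oddReachable (heven x hx) hy₁.1 hy₂.1 (hodd _ hy₁.2)
            (hodd _ hy₂.2)
    _ ≤ #(B.image (partner M)) * d + #B := by
        gcongr
        simpa using sum_le_card_nsmul _ _ _ fun a _ => hdeg a
    _ ≤ #B * (d + 1) := by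
        have := card_image_le (s := B) (f := partner M)
        nlinarith

theorem card_unmatched_le (hopt : IsMaxCoverage G H M) {ε : ℝ} (hε : 0 < ε)
    (hεd : 1 ≤ ε * d) (hdeg : ∀ v, G.degree v ≤ d)
    (hH : ∀ v ∈ H, d * (1 - ε) ≤ G.degree v) (hU : ∀ v ∈ U, v ∈ H ∧ ¬ Matched M v) :
    (#U : ℝ) ≤ 2 * ε * #H := by
  classical
  obtain ⟨B, hBU, hBH, hsum⟩ := hopt.exists_sum_degree_le hdeg hU
  have hcard : #B + #U ≤ #H := by
    rw [← card_union_of_disjoint hBU]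
    exact card_le_card (union_subset hBH fun v hv => (hU v hv).1)
  have hlow : ((#B + #U : ℕ) : ℝ) * (d * (1 - ε)) ≤ #B * (d + 1) := by
    rw [← card_union_of_disjoint hBU]
    calc _ ≤ ∑ x ∈ B ∪ U, (G.degree x : ℝ) := by
          simpa using card_nsmul_le_sum _ _ _ fun x hx =>
            hH x ((mem_union.mp hx).elim (fun hx => hBH hx) fun hx => (hU x hx).1)
      _ ≤ #B * (d + 1) := by exact_mod_cast hsum
  have hcard' : ((#B + #U : ℕ) : ℝ) ≤ #H := by exact_mod_cast hcard
  push_cast at hlow hcard'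
  -- `|U| (d + 1) ≤ (|B| + |U|) (1 + ε d) ≤ |H| (1 + ε d) ≤ 2 ε |H| (d + 1)`, as `1 ≤ ε d`
  have hd : (0 : ℝ) < d + 1 := by positivity
  nlinarith [mul_le_mul_of_nonneg_left hcard' (by positivity : (0 : ℝ) ≤ 1 + ε * d)]

end IsMaxCoverage

theorem exists_good_maximal_matching_general [Fintype V]
    (K : SimpleGraph V) [DecidableRel K.Adj]
    (ε : ℝ) (d : ℕ) (hε0 : 0 < ε)
    (hd : (1 : ℝ)/ε ≤ (d : ℝ)) (hdeg : ∀ v : V, K.degree v ≤ d)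
    (H : Finset V) (hH : ∀ v : V, v ∈ H ↔ (d : ℝ) * (1 - ε) ≤ (K.degree v : ℝ)) :
    ∃ M : Finset (Sym2 V), IsMaximalMatching K M ∧
      ∀ U : Finset V, (∀ v : V, v ∈ U ↔ v ∈ H ∧ ¬ Matched M v) →
        (U.card : ℝ) ≤ 2 * ε * (H.card : ℝ) := by
  obtain ⟨M, hopt⟩ := exists_isMaxCoverage K H
  obtain ⟨M', hMM', hmax⟩ := exists_isMaximalMatching_superset hopt.1
  have hεd : 1 ≤ ε * d := by rwa [div_le_iff₀ hε0, mul_comm] at hd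
  refine ⟨M', hmax, fun U hU => hopt.card_unmatched_le hε0 hεd hdeg (fun v hv => (hH v).1 hv)
    fun v hv => ?_⟩
  obtain ⟨hvH, hvM'⟩ := (hU v).1 hv
  exact ⟨hvH, fun hvM => hvM' (hvM.mono hMM')⟩

theorem exists_good_maximal_matching [Fintype V] [DecidableEq V]
    (K : SimpleGraph V) [DecidableRel K.Adj]
    (ε : ℝ) (d : ℕ) (hε0 : 0 < ε) (hε1 : ε < 1)
    (hd : (1 : ℝ)/ε ≤ (d : ℝ)) (hdeg : ∀ v : V, K.degree v ≤ d)
    (H : Finset V) (hH : ∀ v : V, v ∈ H ↔ (d : ℝ) * (1 - ε) ≤ (K.degree v : ℝ)) :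
    ∃ M : Finset (Sym2 V), IsMaximalMatching K M ∧
      ∀ U : Finset V, (∀ v : V, v ∈ U ↔ v ∈ H ∧ ¬ Matched M v) →
        (U.card : ℝ) ≤ 2 * ε * (H.card : ℝ) :=
  exists_good_maximal_matching_general K ε d hε0 hd hdeg H hH
end

section
/- Let ε ∈ (0, 1/2) and let M be an ε-approximately maximal matching in a graph G. Let G' be obtained from G by at most ε·μ(G) edge insertions and deletions, and let M' be the set of edges of M not deleted. Then M' is a 6ε-approximately maximal matching in G'. -/
/-!
Let `Δ` be the set of updated edges and `M'` the surviving part of `M`. Besides the vertices `D`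
witnessing that `M` is approximately maximal, delete every endpoint of an edge of `Δ` that `M'`
leaves unmatched: at most `2|Δ|` vertices. An edge of `G'` avoiding all deleted vertices is an
edge of `G` avoiding `D` (a new edge would have deleted endpoints), so some endpoint `v` was matched
by `M`; were `v` unmatched by `M'`, its edge in `M` would have been deleted and `v` itself removed.
Since every update changes `μ` by at most one, `μ(G) ≤ μ(G') + |Δ| ≤ μ(G') + ε μ(G)`, whence
`μ(G) ≤ 2 μ(G')` and `|D| + 2|Δ| ≤ 3ε μ(G) ≤ 6ε μ(G')`.
-/

variable {V : Type*}

open Finset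

theorem IsMatching.of_subset {G G' : SimpleGraph V} {M N : Finset (Sym2 V)}
    (hM : IsMatching G M) (hNM : N ⊆ M) (hN : ∀ e ∈ N, e ∈ G'.edgeSet) : IsMatching G' N :=
  ⟨hN, fun e he f hf => hM.2 e (hNM he) f (hNM hf)⟩

theorem mem_edgeSet_restrictVerts {G : SimpleGraph V} {S : Set V} {e : Sym2 V} :
    e ∈ (restrictVerts G S).edgeSet ↔ e ∈ G.edgeSet ∧ ∀ v ∈ e, v ∈ S := by
  induction e using Sym2.ind with
  | _ a b => simp [restrictVerts]

section matchNum

variable [Fintype V]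

theorem bddAbove_matchingCards (G : SimpleGraph V) :
    BddAbove {n | ∃ M : Finset (Sym2 V), IsMatching G M ∧ #M = n} :=
  ⟨Fintype.card (Sym2 V), by rintro n ⟨M, -, rfl⟩; exact card_le_univ M⟩

theorem IsMatching.card_le_matchNum {G : SimpleGraph V} {M : Finset (Sym2 V)}
    (hM : IsMatching G M) : #M ≤ matchNum G :=
  le_csSup (bddAbove_matchingCards G) ⟨M, hM, rfl⟩

theorem exists_isMatching_card_eq_matchNum (G : SimpleGraph V) :
    ∃ M : Finset (Sym2 V), IsMatching G M ∧ #M = matchNum G :=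
  Nat.sSup_mem (s := {n | ∃ M : Finset (Sym2 V), IsMatching G M ∧ #M = n})
    ⟨0, ∅, ⟨by simp, by simp⟩, rfl⟩ (bddAbove_matchingCards G)

theorem matchNum_le_matchNum_add_card_symmDiff [DecidableEq V] (G G' : SimpleGraph V)
    [DecidableRel G.Adj] [DecidableRel G'.Adj] :
    matchNum G ≤ matchNum G' + #(symmDiff G.edgeFinset G'.edgeFinset) := by
  obtain ⟨N, hN, hNcard⟩ := exists_isMatching_card_eq_matchNum G
  have hkept : IsMatching G' (N.filter (· ∈ G'.edgeFinset)) :=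
    hN.of_subset (filter_subset _ _) fun e he => SimpleGraph.mem_edgeFinset.1 (mem_filter.1 he).2
  have hlost : N.filter (· ∉ G'.edgeFinset) ⊆ symmDiff G.edgeFinset G'.edgeFinset := by
    intro e he
    rw [mem_filter] at he
    exact mem_symmDiff.2 (Or.inl ⟨SimpleGraph.mem_edgeFinset.2 (hN.1 e he.1), he.2⟩)
  rw [← hNcard, ← card_filter_add_card_filter_not (· ∈ G'.edgeFinset)]
  exact add_le_add hkept.card_le_matchNum (card_le_card hlost)

end matchNum

section update

variable [DecidableEq V]

open Classical in
noncomputable def exposedEndpoints (Δ M : Finset (Sym2 V)) : Finset V :=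
  (Δ.biUnion Sym2.toFinset).filter fun v => ¬ Matched M v

theorem mem_exposedEndpoints {Δ M : Finset (Sym2 V)} {v : V} :
    v ∈ exposedEndpoints Δ M ↔ (∃ e ∈ Δ, v ∈ e) ∧ ¬ Matched M v := by
  simp [exposedEndpoints]

theorem card_exposedEndpoints_le (Δ M : Finset (Sym2 V)) :
    #(exposedEndpoints Δ M) ≤ 2 * #Δ :=
  calc #(exposedEndpoints Δ M) ≤ #(Δ.biUnion Sym2.toFinset) := by
        classical exact card_filter_le _ _
    _ ≤ #Δ * 2 := card_biUnion_le_card_mul _ _ _ fun e _ => by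
        rw [Sym2.card_toFinset]; split_ifs <;> norm_num
    _ = 2 * #Δ := mul_comm _ _

variable [Fintype V] {G G' : SimpleGraph V} [DecidableRel G.Adj] [DecidableRel G'.Adj]
  {D : Finset V} {M M' : Finset (Sym2 V)}

theorem isMatching_restrictVerts_exposedEndpoints
    (hM : IsMaximalMatching (restrictVerts G (↑D)ᶜ) M)
    (hM' : ∀ e : Sym2 V, e ∈ M' ↔ e ∈ M ∧ e ∈ G'.edgeSet) :
    IsMatching (restrictVerts G'
      (↑(D ∪ exposedEndpoints (symmDiff G.edgeFinset G'.edgeFinset) M'))ᶜ) M' := by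
  refine hM.1.of_subset (fun e he => ((hM' e).1 he).1) fun e he => ?_
  have heM := ((hM' e).1 he)
  refine mem_edgeSet_restrictVerts.2 ⟨heM.2, fun v hv => ?_⟩
  have hvD := (mem_edgeSet_restrictVerts.1 (hM.1.1 e heM.1)).2 v hv
  simp only [coe_union, Set.mem_compl_iff, Set.mem_union, mem_coe, mem_exposedEndpoints,
    not_or, not_and, not_not] at hvD ⊢
  exact ⟨hvD, fun _ => ⟨e, he, hv⟩⟩

theorem isMaximalMatching_restrictVerts_exposedEndpoints
    (hM : IsMaximalMatching (restrictVerts G (↑D)ᶜ) M)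
    (hM' : ∀ e : Sym2 V, e ∈ M' ↔ e ∈ M ∧ e ∈ G'.edgeSet) :
    IsMaximalMatching (restrictVerts G'
      (↑(D ∪ exposedEndpoints (symmDiff G.edgeFinset G'.edgeFinset) M'))ᶜ) M' := by
  refine ⟨isMatching_restrictVerts_exposedEndpoints hM hM', fun e he => ?_⟩
  obtain ⟨heG', hkept⟩ := mem_edgeSet_restrictVerts.1 he
  simp only [coe_union, Set.mem_compl_iff, Set.mem_union, mem_coe, not_or] at hkept
  by_contra! hfree
  have hupdated : ∀ f ∈ symmDiff G.edgeFinset G'.edgeFinset, ∀ v ∈ e, v ∉ f :=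
    fun f hf v hv hvf => (hkept v hv).2 (mem_exposedEndpoints.2 ⟨⟨f, hf, hvf⟩, hfree v hv⟩)
  have heG : e ∈ G.edgeSet := by
    by_contra heG
    refine hupdated e (mem_symmDiff.2 (Or.inr ⟨?_, ?_⟩)) _ e.out_fst_mem e.out_fst_mem <;> simpa
  obtain ⟨v, hv, f, hfM, hvf⟩ :=
    hM.2 e (mem_edgeSet_restrictVerts.2 ⟨heG, fun v hv => (hkept v hv).1⟩)
  have hfG' : f ∉ G'.edgeSet := fun hf => hfree v hv ⟨f, (hM' f).2 ⟨hfM, hf⟩, hvf⟩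
  have hfG : f ∈ G.edgeSet := (mem_edgeSet_restrictVerts.1 (hM.1.1 f hfM)).1
  exact hupdated f (mem_symmDiff.2 (Or.inl ⟨by simpa, by simpa⟩)) v hv hvf

end update

theorem amm_stability [Fintype V] [DecidableEq V]
    (G G' : SimpleGraph V) [DecidableRel G.Adj] [DecidableRel G'.Adj]
    (ε : ℝ) (hε0 : 0 < ε) (hε : ε < 1/2)
    (M : Finset (Sym2 V)) (hM : IsAMM G ε M)
    (hupd : ((symmDiff G.edgeFinset G'.edgeFinset).card : ℝ) ≤ ε * matchNum G)
    (M' : Finset (Sym2 V)) (hM' : ∀ e : Sym2 V, e ∈ M' ↔ e ∈ M ∧ e ∈ G'.edgeSet) :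
    IsAMM G' (6 * ε) M' := by
  obtain ⟨-, D, hD, hmax⟩ := hM
  set Δ := symmDiff G.edgeFinset G'.edgeFinset
  have hmax' := isMaximalMatching_restrictVerts_exposedEndpoints hmax hM'
  have hμ : (matchNum G : ℝ) ≤ 2 * matchNum G' := by
    have : (matchNum G : ℝ) ≤ matchNum G' + #Δ := by
      exact_mod_cast matchNum_le_matchNum_add_card_symmDiff G G'
    nlinarith [(matchNum G).cast_nonneg (α := ℝ)]
  have hexposed : (#(exposedEndpoints Δ M') : ℝ) ≤ 2 * #Δ := by
    exact_mod_cast card_exposedEndpoints_le Δ M'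
  refine ⟨hmax'.1.of_subset subset_rfl fun e he => ((hM' e).1 he).2, _, ?_, hmax'⟩
  calc (#(D ∪ exposedEndpoints Δ M') : ℝ) ≤ #D + #(exposedEndpoints Δ M') := by
        exact_mod_cast card_union_le _ _
    _ ≤ 3 * ε * matchNum G := by linarith
    _ ≤ 6 * ε * matchNum G' := by nlinarith
end
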